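/- Consider the two-layer drive-response networked sampled-data system under the Slow Inter-layer multi-rate sampling pattern with integer l ≥ 1: define the lifted matrices Φ̃^{1,1} = (Φ^{1,1})^l, Φ̃^{2,2} = (Φ^{2,2})^l, Φ̃^{2,1} = (Σ_{r=0}^{l−1} (Φ^{2,2})^r)·Φ^{2,1}, Ψ̃^{1,1} = [(Φ^{1,1})^{l−1} Ψ^{1,1}, …, Φ^{1,1} Ψ^{1,1}, Ψ^{1,1}], Ψ̃^{2,2} = [(Φ^{2,2})^{l−1} Ψ^{2,2}, …, Φ^{2,2} Ψ^{2,2}, Ψ^{2,2}], Φ̃_s = [[Φ̃^{1,1}, 0], [Φ̃^{2,1}, Φ̃^{2,2}]], Ψ̃_s = diag(Ψ̃^{1,1}, Ψ̃^{2,2}). Suppose: (1) for every μ ∈ ℂ and every nonzero row vector η ∈ ℂ^{1×Nn} with η (Φ^{1,1})^l = μ η, one has η(Δ^1 ⊗ 𝓑^1(h)) ≠ 0; and (2) for every μ ∈ ℂ, every nonzero η ∈ ℂ^{1×Nn} with η (Φ^{2,2})^l = μ η, and every ξ ∈ ℂ^{1×Nn} with ξ(μ I_{Nn} − (Φ^{1,1})^l)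 = η Φ̃^{2,1}, the concatenated row vector [ξ Ψ̃^{1,1}, η(Δ^2 ⊗ 𝓑^2(h))] is nonzero. Then the discrete-time system x(k+1) = Φ̃_s x(k) + Ψ̃_s u(k) is controllable. -/

import Mathlib

open Matrix
open scoped Kronecker

/-- Matrix exponential of a real square matrix. -/
noncomputable def matExp {k : Type*} [Fintype k] [DecidableEq k]
    (A : Matrix k k ℝ) : Matrix k k ℝ := NormedSpace.exp A

/-- Entrywise integral `∫₀ʰ e^{Aτ} dτ`. -/
noncomputable def intExp {k : Type*} [Fintype k] [DecidableEq k]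
    (A : Matrix k k ℝ) (h : ℝ) : Matrix k k ℝ :=
  Matrix.of fun i j => ∫ τ in (0:ℝ)..h, matExp (τ • A) i j

/-- A real matrix regarded as a complex matrix entrywise. -/
def cmap {a b : Type*} (M : Matrix a b ℝ) : Matrix a b ℂ := M.map Complex.ofReal

/-- `θ` is a (complex) eigenvalue of the complex matrix `M`. -/
def IsEig {k : Type*} [Fintype k] (M : Matrix k k ℂ) (θ : ℂ) : Prop :=
  ∃ v : k → ℂ, v ≠ 0 ∧ M.mulVec v = θ • v

/-- Controllability of the discrete-time linear system `x(k+1) = F x(k) + G u(k)`: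
every target state can be reached from every initial state in finite time. -/
def Controllable {q r : Type*} [Fintype q] [Fintype r]
    (F : Matrix q q ℝ) (G : Matrix q r ℝ) : Prop :=
  ∀ x₀ xf : q → ℝ, ∃ (T : ℕ) (u : ℕ → r → ℝ) (x : ℕ → q → ℝ),
    x 0 = x₀ ∧ (∀ k, x (k + 1) = F.mulVec (x k) + G.mulVec (u k)) ∧ x T = xf

/-!
Hautus test: the reachable subspace `⨆ j, range (F ^ j * G)` is `F`-invariant, so if it were
proper, its annihilator in `ℂ^q` would be a nonzero subspace invariant under `η ↦ η F` and would
therefore contain a left eigenvector `η` of `F` with `η G = 0`. Finite dimensionality turns the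
reachable subspace into the set of states reachable in a fixed number of steps.

For the block lower-triangular lifted system, a left eigenvector `[ξ, η]` either has `η = 0`, and
then `ξ` is a left eigenvector of `(Φ¹¹)ˡ` (condition (1)), or `η` is a left eigenvector of
`(Φ²²)ˡ` with `ξ (μ - (Φ¹¹)ˡ) = η Φ̃²¹` (condition (2)). In both cases the last block column
`Ψᴷᴷ` of `Ψ̃ᴷᴷ` sees the nonzero product.
-/

open Finset

section Complexification

variable {a b c : Type*}

@[simp] lemma cmap_zero : cmap (0 : Matrix a b ℝ) = 0 :=
  Matrix.map_zero _ Complex.ofReal_zero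

lemma cmap_mul [Fintype b] (M : Matrix a b ℝ) (N : Matrix b c ℝ) :
    cmap (M * N) = cmap M * cmap N :=
  Matrix.map_mul (f := Complex.ofRealHom)

lemma cmap_fromBlocks {a' b' : Type*} (A : Matrix a b ℝ) (B : Matrix a b' ℝ)
    (C : Matrix a' b ℝ) (D : Matrix a' b' ℝ) :
    cmap (fromBlocks A B C D) = fromBlocks (cmap A) (cmap B) (cmap C) (cmap D) :=
  fromBlocks_map A B C D _

lemma ofReal_vecMul_cmap [Fintype a] (w : a → ℝ) (M : Matrix a b ℝ) :
    (fun i => (w i : ℂ)) ᵥ* cmap M = fun j => ((w ᵥ* M) j : ℂ) :=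
  funext fun j => (RingHom.map_vecMul Complex.ofRealHom M w j).symm

end Complexification

section LinearSystem

variable {q r : Type*} [Fintype q] [DecidableEq q] [Fintype r]

def trajectory (F : Matrix q q ℝ) (G : Matrix q r ℝ) (x₀ : q → ℝ) (u : ℕ → r → ℝ) :
    ℕ → q → ℝ
  | 0 => x₀
  | k + 1 => F *ᵥ trajectory F G x₀ u k + G *ᵥ u k

lemma trajectory_eq (F : Matrix q q ℝ) (G : Matrix q r ℝ) (x₀ : q → ℝ) (u : ℕ → r → ℝ)
    (k : ℕ) :
    trajectory F G x₀ u k = F ^ k *ᵥ x₀ + ∑ j ∈ range k, (F ^ j * G) *ᵥ u (k - 1 - j) := by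
  induction k with
  | zero => simp [trajectory]
  | succ k ih =>
    rw [trajectory, ih, sum_range_succ', mulVec_add, mulVec_mulVec, ← pow_succ', mulVec_sum,
      pow_zero, Matrix.one_mul, add_assoc, Nat.add_sub_cancel, Nat.sub_zero]
    congr 2
    refine sum_congr rfl fun j hj => ?_
    rw [mulVec_mulVec, ← Matrix.mul_assoc, ← pow_succ', show k - (j + 1) = k - 1 - j by omega]

lemma controllable_of_iSup_range_eq_top (F : Matrix q q ℝ) (G : Matrix q r ℝ)
    (h : ⨆ j, LinearMap.range (F ^ j * G).mulVecLin = ⊤) : Controllable F G := by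
  obtain ⟨s, hs⟩ := CompleteLattice.IsCompactElement.exists_finset_of_le_iSup
    (hk := (Submodule.fg_iff_compact ⊤).1 Module.Finite.fg_top) (h := h.ge)
  set T := s.sup id + 1
  have hT : ⊤ ≤ ⨆ j ∈ range T, LinearMap.range (F ^ j * G).mulVecLin :=
    hs.trans <| biSup_mono fun j hj => mem_range.2 (Nat.lt_succ_of_le (le_sup (f := id) hj))
  intro x₀ xf
  obtain ⟨y, hy⟩ := (Submodule.mem_iSup_finset_iff_exists_sum _ (xf - F ^ T *ᵥ x₀)).1
    (hT Submodule.mem_top)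
  choose v hv using fun j => (y j).2
  refine ⟨T, fun k => v (T - 1 - k), trajectory F G x₀ _, rfl, fun k => rfl, ?_⟩
  rw [trajectory_eq, ← add_sub_cancel (F ^ T *ᵥ x₀) xf, ← hy]
  congr 1
  refine sum_congr rfl fun j hj => ?_
  rw [show T - 1 - (T - 1 - j) = j by have := mem_range.1 hj; omega, ← hv]
  rfl

end LinearSystem

lemma Module.End.exists_hasEigenvector_mem {K V : Type*} [Field K] [IsAlgClosed K]
    [AddCommGroup V] [Module K V] [FiniteDimensional K V] (f : Module.End K V)
    {p : Submodule K V} (hp : p ≠ ⊥) (hfp : ∀ x ∈ p, f x ∈ p) :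
    ∃ μ, ∃ x ∈ p, f.HasEigenvector μ x := by
  have : Nontrivial p := Submodule.nontrivial_iff_ne_bot.2 hp
  obtain ⟨μ, hμ⟩ := Module.End.exists_eigenvalue (f.restrict hfp)
  obtain ⟨x, hx⟩ := hμ.exists_hasEigenvector
  refine ⟨μ, x, x.2, ?_, fun h0 => hx.2 (Subtype.ext h0)⟩
  simpa [Module.End.mem_eigenspace_iff, Subtype.ext_iff] using hx.apply_eq_smul

section Hautus

variable {q r : Type*} [Fintype q] [DecidableEq q] [Fintype r]

lemma iSup_range_pow_mul_eq_top (F : Matrix q q ℝ) (G : Matrix q r ℝ)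
    (hFG : ∀ (μ : ℂ) (η : q → ℂ), η ≠ 0 → η ᵥ* cmap F = μ • η → η ᵥ* cmap G ≠ 0) :
    ⨆ j, LinearMap.range (F ^ j * G).mulVecLin = ⊤ := by
  set K := ⨆ j, LinearMap.range (F ^ j * G).mulVecLin
  let ann : Submodule ℂ (q → ℂ) := ⨅ j : ℕ, LinearMap.ker (cmap (F ^ j * G)).vecMulLinear
  have mem_ann : ∀ η, η ∈ ann ↔ ∀ j, η ᵥ* cmap (F ^ j * G) = 0 := by
    simp [ann, Submodule.mem_iInf]
  have ann_eq_bot : ann = ⊥ := by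
    by_contra hne
    obtain ⟨μ, η, hηann, hη⟩ := Module.End.exists_hasEigenvector_mem (cmap F).vecMulLinear hne
      fun η hη => (mem_ann _).2 fun j => by
        rw [vecMulLinear_apply, vecMul_vecMul, ← cmap_mul, ← Matrix.mul_assoc, ← pow_succ']
        exact (mem_ann η).1 hη (j + 1)
    refine hFG μ η hη.2 hη.apply_eq_smul ?_
    simpa using (mem_ann η).1 hηann 0
  by_contra hK
  obtain ⟨φ, hφK, hφ⟩ := Submodule.exists_mem_ne_zero_of_ne_bot
    (Submodule.dualAnnihilator_eq_bot_iff.not.2 hK)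
  set w := (dotProductEquiv ℝ q).symm φ
  have hw : ∀ j, w ᵥ* (F ^ j * G) = 0 := fun j => funext fun c => by
    classical
    rw [Pi.zero_apply, ← dotProduct_single_one (w ᵥ* _), ← dotProduct_mulVec,
      ← dotProductEquiv_apply_apply, LinearEquiv.apply_symm_apply]
    exact (Submodule.mem_dualAnnihilator φ).1 hφK _ <|
      Submodule.mem_iSup_of_mem j ⟨Pi.single c 1, rfl⟩
  have : (fun i => (w i : ℂ)) ∈ ann := (mem_ann _).2 fun j => by
    ext; simp [ofReal_vecMul_cmap, hw]
  rw [ann_eq_bot, Submodule.mem_bot] at this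
  refine hφ ((dotProductEquiv ℝ q).symm.map_eq_zero_iff.1 (funext fun i => ?_))
  simpa [w] using congrFun this i

lemma controllable_of_hautus (F : Matrix q q ℝ) (G : Matrix q r ℝ)
    (hFG : ∀ (μ : ℂ) (η : q → ℂ), η ≠ 0 → η ᵥ* cmap F = μ • η → η ᵥ* cmap G ≠ 0) :
    Controllable F G :=
  controllable_of_iSup_range_eq_top F G (iSup_range_pow_mul_eq_top F G hFG)

end Hautus

section BlockTriangular

variable {R ι₁ ι₂ κ₁ κ₂ : Type*} [CommRing R] [Fintype ι₁] [Fintype ι₂] [DecidableEq ι₁]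

lemma vecMul_fromBlocks_ne_zero {F₁₁ : Matrix ι₁ ι₁ R} {F₂₁ : Matrix ι₂ ι₁ R}
    {F₂₂ : Matrix ι₂ ι₂ R} {G₁ : Matrix ι₁ κ₁ R} {G₂ : Matrix ι₂ κ₂ R} {μ : R}
    (h₁ : ∀ ξ, ξ ≠ 0 → ξ ᵥ* F₁₁ = μ • ξ → ξ ᵥ* G₁ ≠ 0)
    (h₂ : ∀ η ξ, η ≠ 0 → η ᵥ* F₂₂ = μ • η → ξ ᵥ* (μ • 1 - F₁₁) = η ᵥ* F₂₁ →
      Sum.elim (ξ ᵥ* G₁) (η ᵥ* G₂) ≠ 0)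
    {z : ι₁ ⊕ ι₂ → R} (hz : z ≠ 0) (hzF : z ᵥ* fromBlocks F₁₁ 0 F₂₁ F₂₂ = μ • z) :
    z ᵥ* fromBlocks G₁ 0 0 G₂ ≠ 0 := by
  obtain ⟨ξ, η, rfl⟩ : ∃ ξ η, z = Sum.elim ξ η := ⟨_, _, (Sum.elim_comp_inl_inr z).symm⟩
  simp only [vecMul_fromBlocks, Sum.elim_comp_inl, Sum.elim_comp_inr, vecMul_zero, zero_add,
    add_zero] at hzF ⊢
  have hξ : ξ ᵥ* F₁₁ + η ᵥ* F₂₁ = μ • ξ := funext fun i => congrFun hzF (.inl i)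
  have hη : η ᵥ* F₂₂ = μ • η := funext fun i => congrFun hzF (.inr i)
  by_cases hη0 : η = 0
  · subst hη0
    rw [zero_vecMul, add_zero] at hξ
    have hξ0 : ξ ≠ 0 := by rintro rfl; exact hz Sum.elim_zero_zero
    intro h
    exact h₁ ξ hξ0 hξ (Sum.elim_eq_iff.1 (h.trans Sum.elim_zero_zero.symm)).1
  · refine h₂ η ξ hη0 hη ?_
    rw [vecMul_sub, vecMul_smul, vecMul_one, ← hξ, add_sub_cancel_left]

lemma vecMul_eq_zero_of_blockColumn {Q ι P : Type*} [Fintype Q]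
    {M : Matrix Q (ι × P) R} {Ψ : Matrix Q P R} (i : ι) (hM : ∀ a c, M a (i, c) = Ψ a c)
    {ξ : Q → R} (h : ξ ᵥ* M = 0) : ξ ᵥ* Ψ = 0 := by
  funext c
  simpa [vecMul, dotProduct, hM] using congrFun h (i, c)

end BlockTriangular

theorem slowInterLayer_controllable_general
    (N n p l : ℕ) (hl : 1 ≤ l)
    (Φ11 Φ22 : Matrix (Fin N × Fin n) (Fin N × Fin n) ℝ)
    (Ψ11 Ψ22 : Matrix (Fin N × Fin n) (Fin N × Fin p) ℝ)
    -- lifted matrices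
    (Φt21 : Matrix (Fin N × Fin n) (Fin N × Fin n) ℝ)
    (Ψt11 Ψt22 : Matrix (Fin N × Fin n) (Fin l × (Fin N × Fin p)) ℝ)
    (hΨt11 : Ψt11 = Matrix.of fun a q => ((Φ11 ^ (l - 1 - (q.1 : ℕ))) * Ψ11) a q.2)
    (hΨt22 : Ψt22 = Matrix.of fun a q => ((Φ22 ^ (l - 1 - (q.1 : ℕ))) * Ψ22) a q.2)
    -- condition (1)
    (cond1 : ∀ (μ : ℂ) (η : Fin N × Fin n → ℂ), η ≠ 0 →
      η ᵥ* cmap (Φ11 ^ l) = μ • η → η ᵥ* cmap Ψ11 ≠ 0)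
    -- condition (2)
    (cond2 : ∀ (μ : ℂ) (η ξ : Fin N × Fin n → ℂ), η ≠ 0 →
      η ᵥ* cmap (Φ22 ^ l) = μ • η →
      ξ ᵥ* (μ • (1 : Matrix (Fin N × Fin n) (Fin N × Fin n) ℂ) - cmap (Φ11 ^ l))
        = η ᵥ* cmap Φt21 →
      Sum.elim (ξ ᵥ* cmap Ψt11) (η ᵥ* cmap Ψ22) ≠ 0) :
    Controllable (Matrix.fromBlocks (Φ11 ^ l) 0 Φt21 (Φ22 ^ l))
      (Matrix.fromBlocks Ψt11 0 0 Ψt22) := by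
  have last_block (Φ : Matrix (Fin N × Fin n) (Fin N × Fin n) ℝ)
      (Ψ : Matrix (Fin N × Fin n) (Fin N × Fin p) ℝ) (ξ : Fin N × Fin n → ℂ) :
      ξ ᵥ* cmap (Matrix.of fun a (q : Fin l × (Fin N × Fin p)) =>
        (Φ ^ (l - 1 - (q.1 : ℕ)) * Ψ) a q.2) = 0 → ξ ᵥ* cmap Ψ = 0 :=
    vecMul_eq_zero_of_blockColumn ⟨l - 1, by omega⟩ fun a c => by simp [cmap]
  refine controllable_of_hautus _ _ fun μ z hz hzF => ?_
  simp only [cmap_fromBlocks, cmap_zero] at hzF ⊢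
  refine vecMul_fromBlocks_ne_zero (fun ξ hξ hξF hξG => ?_) (fun η ξ hη hηF hξη hG => ?_) hz hzF
  · exact cond1 μ ξ hξ hξF (last_block Φ11 Ψ11 ξ (hΨt11 ▸ hξG))
  · obtain ⟨hξG, hηG⟩ := Sum.elim_eq_iff.1 (hG.trans Sum.elim_zero_zero.symm)
    refine cond2 μ η ξ hη hηF hξη ?_
    rw [hξG, last_block Φ22 Ψ22 η (hΨt22 ▸ hηG), Sum.elim_zero_zero]

/-- sufficient controllability condition for the two-layer drive-response
networked sampled-data system under the Slow Inter-layer multi-rate sampling pattern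
(Corollary 4 in the paper). Column block `r` (for `r = 0, …, l−1`, left to right) of the
lifted input matrices is `(Φ^{K,K})^{l−1−r} Ψ^{K,K}`. -/
theorem slowInterLayer_controllable
    (N n m p l : ℕ) (hl : 1 ≤ l)
    (A1 A2 : Matrix (Fin n) (Fin n) ℝ) (B1 B2 : Matrix (Fin n) (Fin p) ℝ)
    (C1 C2 : Matrix (Fin m) (Fin n) ℝ) (H1 H2 : Matrix (Fin n) (Fin m) ℝ)
    (W1 W2 : Matrix (Fin N) (Fin N) ℝ) (Δ1 Δ2 : Matrix (Fin N) (Fin N) ℝ)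
    (hΔ1d : Δ1.IsDiag) (hΔ2d : Δ2.IsDiag)
    (hΔ1v : ∀ i, Δ1 i i = 0 ∨ Δ1 i i = 1) (hΔ2v : ∀ i, Δ2 i i = 0 ∨ Δ2 i i = 1)
    (D21 : Matrix (Fin N) (Fin N) ℝ) (P21 : Matrix (Fin n) (Fin m) ℝ)
    (h : ℝ) (hh : 0 < h)
    (Φ11 Φ22 Φ21 : Matrix (Fin N × Fin n) (Fin N × Fin n) ℝ)
    (Ψ11 Ψ22 : Matrix (Fin N × Fin n) (Fin N × Fin p) ℝ)
    (hΦ11 : Φ11 = (1 : Matrix (Fin N) (Fin N) ℝ) ⊗ₖ matExp (h • A1)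
        + W1 ⊗ₖ (intExp A1 h * H1 * C1))
    (hΦ22 : Φ22 = (1 : Matrix (Fin N) (Fin N) ℝ) ⊗ₖ matExp (h • A2)
        + W2 ⊗ₖ (intExp A2 h * H2 * C2))
    (hΦ21 : Φ21 = D21 ⊗ₖ (intExp A2 h * P21 * C1))
    (hΨ11 : Ψ11 = Δ1 ⊗ₖ (intExp A1 h * B1))
    (hΨ22 : Ψ22 = Δ2 ⊗ₖ (intExp A2 h * B2))
    -- lifted matrices
    (Φt21 : Matrix (Fin N × Fin n) (Fin N × Fin n) ℝ)
    (hΦt21 : Φt21 = (∑ r ∈ Finset.range l, Φ22 ^ r) * Φ21)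
    (Ψt11 Ψt22 : Matrix (Fin N × Fin n) (Fin l × (Fin N × Fin p)) ℝ)
    (hΨt11 : Ψt11 = Matrix.of fun a q => ((Φ11 ^ (l - 1 - (q.1 : ℕ))) * Ψ11) a q.2)
    (hΨt22 : Ψt22 = Matrix.of fun a q => ((Φ22 ^ (l - 1 - (q.1 : ℕ))) * Ψ22) a q.2)
    -- condition (1)
    (cond1 : ∀ (μ : ℂ) (η : Fin N × Fin n → ℂ), η ≠ 0 →
      η ᵥ* cmap (Φ11 ^ l) = μ • η → η ᵥ* cmap Ψ11 ≠ 0)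
    -- condition (2)
    (cond2 : ∀ (μ : ℂ) (η ξ : Fin N × Fin n → ℂ), η ≠ 0 →
      η ᵥ* cmap (Φ22 ^ l) = μ • η →
      ξ ᵥ* (μ • (1 : Matrix (Fin N × Fin n) (Fin N × Fin n) ℂ) - cmap (Φ11 ^ l))
        = η ᵥ* cmap Φt21 →
      Sum.elim (ξ ᵥ* cmap Ψt11) (η ᵥ* cmap Ψ22) ≠ 0) :
    Controllable (Matrix.fromBlocks (Φ11 ^ l) 0 Φt21 (Φ22 ^ l))
      (Matrix.fromBlocks Ψt11 0 0 Ψt22) :=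
  slowInterLayer_controllable_general N n p l hl Φ11 Φ22 Ψ11 Ψ22 Φt21 Ψt11 Ψt22 hΨt11 hΨt22 cond1
    cond2
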